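/- arXiv:1607.03139 — 6 statements merged into one kernel-verified Lean document; each statement's English description precedes it below -/
import Mathlib

section
/- Let L be a first-order language, let A and B be L-structures with A a substructure of B, and let K be a class of L-structures with A, B ∈ K such that K is closed under ultraproducts. Then the following are equivalent: (1) A is an epic substructure of B in K; (2) for every b ∈ B there exist a primitive positive formula φ(x₁,…,xₙ,y) that defines a function in K and elements a₁,…,aₙ ∈ A such that [φ]^B(ā) = b (i.e., b is the unique element of B with B ⊨ φ(ā,b)). -/
/-!
Homomorphisms preserve primitive positive formulas, so if `b` is the unique solution of a
functional p.p. formula with parameters from `A`, any two homomorphisms agreeing on `A` agree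
at `b`.

Conversely, suppose `b ∉ A` is not so generated. Take two copies of the positive atomic diagram
of `B`, glue them along `A` and ask the two copies of `b` to differ. A finite part of this
is satisfiable in `K`: otherwise the conjunction of the finitely many atomic facts involved,
with the elements of `A` as parameters, `b` as output and all other elements quantified away,
would be a p.p. formula defining a function in `K` and satisfied by `b`. Since `K` is closed
under ultraproducts, the whole diagram is satisfiable in `K`, which gives two homomorphisms
from `B` into a member of `K` that agree on `A` but not at `b`.
-/

open FirstOrder FirstOrder.Language

universe u v w

namespace Epic

variable {L : FirstOrder.Language.{u, v}}

/-- A finite conjunction of atomic formulas. -/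
inductive IsConjAtomic {α : Type w} : ∀ {n : ℕ}, L.BoundedFormula α n → Prop
  | of_isAtomic {n : ℕ} {φ : L.BoundedFormula α n} : φ.IsAtomic → IsConjAtomic φ
  | inf {n : ℕ} {φ ψ : L.BoundedFormula α n} :
      IsConjAtomic φ → IsConjAtomic ψ → IsConjAtomic (φ ⊓ ψ)

/-- A primitive positive formula: a block of existential quantifiers in front of a
finite conjunction of atomic formulas. -/
inductive IsPP {α : Type w} : ∀ {n : ℕ}, L.BoundedFormula α n → Prop
  | of_conj {n : ℕ} {φ : L.BoundedFormula α n} : IsConjAtomic φ → IsPP φ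
  | ex {n : ℕ} {φ : L.BoundedFormula α (n + 1)} : IsPP φ → IsPP φ.ex

variable (L) in
/-- A class of `L`-structures with universes in `Type u`. -/
def StrClass := ∀ (M : Type u) [L.Structure M], Prop

/-- The formula `φ(x₁,…,xₙ,y)` defines a (partial) function in the class `K`:
`K ⊨ ∀ x̄ y z, φ(x̄,y) ∧ φ(x̄,z) → y = z`. -/
def DefinesFn (K : StrClass L) {n : ℕ} (φ : L.Formula (Fin (n + 1))) : Prop :=
  ∀ (C : Type u) [L.Structure C], K C → ∀ (v : Fin n → C) (y z : C),
    φ.Realize (Fin.snoc v y) → φ.Realize (Fin.snoc v z) → y = z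

/-- `A` is an epic substructure of `B` in the class `K`: any two homomorphisms from `B`
into a member of `K` agreeing on `A` are equal. -/
def IsEpicSubstructure (K : StrClass L) {B : Type u} [L.Structure B]
    (A : L.Substructure B) : Prop :=
  ∀ (C : Type u) [L.Structure C], K C → ∀ g g' : B →[L] C,
    (∀ a ∈ A, g a = g' a) → g = g'

/-- `h` is a `K`-epimorphism: it is right-cancellable for homomorphisms into members of `K`. -/
def IsEpi (K : StrClass L) {A B : Type u} [L.Structure A] [L.Structure B]
    (h : A →[L] B) : Prop :=
  ∀ (C : Type u) [L.Structure C], K C → ∀ g g' : B →[L] C,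
    g.comp h = g'.comp h → g = g'


theorem IsConjAtomic.realize_hom {M N : Type*} [L.Structure M] [L.Structure N]
    (g : M →[L] N) {α : Type w} {n : ℕ} {φ : L.BoundedFormula α n}
    (h : IsConjAtomic φ) {v : α → M} {xs : Fin n → M}
    (hφ : φ.Realize v xs) : φ.Realize (g ∘ v) (g ∘ xs) := by
  have helim : Sum.elim (g ∘ v) (g ∘ xs) = g ∘ Sum.elim v xs := (Sum.comp_elim g v xs).symm
  induction h with
  | of_isAtomic h =>
    cases h with
    | equal t₁ t₂ =>
      simp only [BoundedFormula.realize_bdEqual, helim, HomClass.realize_term] at hφ ⊢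
      rw [hφ]
    | rel R ts =>
      simp only [BoundedFormula.realize_rel, helim, HomClass.realize_term] at hφ ⊢
      exact g.map_rel R _ hφ
  | inf _ _ ih₁ ih₂ =>
    rw [BoundedFormula.realize_inf] at hφ ⊢
    exact ⟨ih₁ hφ.1, ih₂ hφ.2⟩

theorem IsPP.realize_hom {M N : Type*} [L.Structure M] [L.Structure N]
    (g : M →[L] N) {α : Type w} {n : ℕ} {φ : L.BoundedFormula α n}
    (h : IsPP φ) {v : α → M} {xs : Fin n → M}
    (hφ : φ.Realize v xs) : φ.Realize (g ∘ v) (g ∘ xs) := by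
  induction h with
  | of_conj h => exact h.realize_hom g hφ
  | ex _ ih =>
    obtain ⟨x, hx⟩ := BoundedFormula.realize_ex.1 hφ
    exact BoundedFormula.realize_ex.2 ⟨g x, Fin.comp_snoc g _ x ▸ ih hx⟩

theorem IsPP.realize_formula_hom {M N : Type*} [L.Structure M] [L.Structure N]
    (g : M →[L] N) {α : Type w} {φ : L.Formula α} (h : IsPP φ) {v : α → M}
    (hφ : φ.Realize v) : φ.Realize (g ∘ v) := by
  have := h.realize_hom g (xs := default) hφ
  rwa [Subsingleton.elim (g ∘ (default : Fin 0 → M)) default] at this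

theorem IsConjAtomic.relabel {α : Type w} {β : Type*} {m k : ℕ} {φ : L.BoundedFormula α k}
    (h : IsConjAtomic φ) (g : α → β ⊕ Fin m) : IsConjAtomic (φ.relabel g) := by
  induction h with
  | of_isAtomic h => exact .of_isAtomic (h.relabel g)
  | inf _ _ ih₁ ih₂ => exact .inf ih₁ ih₂

theorem IsConjAtomic.foldr_inf {α : Type w} {n : ℕ} {l : List (L.BoundedFormula α n)}
    {φ : L.BoundedFormula α n} (hl : ∀ ψ ∈ l, ψ.IsAtomic) (hφ : IsConjAtomic φ) :
    IsConjAtomic (l.foldr (· ⊓ ·) φ) := by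
  induction l with
  | nil => exact hφ
  | cons ψ l ih =>
    exact .inf (.of_isAtomic (hl ψ List.mem_cons_self))
      (ih fun χ hχ => hl χ (List.mem_cons_of_mem ψ hχ))

theorem IsPP.exs {α : Type w} : ∀ {k : ℕ} {φ : L.BoundedFormula α k}, IsPP φ → IsPP φ.exs
  | 0, _, h => h
  | _ + 1, φ, h => IsPP.exs (φ := φ.ex) h.ex

theorem IsConjAtomic.isPP_iExs {α : Type w} {γ : Type*} [Finite γ]
    {φ : L.Formula (α ⊕ γ)} (h : IsConjAtomic φ) : IsPP (φ.iExs γ) :=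
  (IsPP.of_conj (h.relabel _)).exs

theorem realize_foldr_inf {M : Type*} [L.Structure M] {α : Type*} (l : List (L.Formula α))
    (φ : L.Formula α) (v : α → M) :
    (l.foldr (· ⊓ ·) φ).Realize v ↔ (∀ ψ ∈ l, ψ.Realize v) ∧ φ.Realize v := by
  induction l with
  | nil => simp
  | cons ψ l ih => simp [Formula.realize_inf, ih, and_assoc]

theorem realize_congr_of_eqOn_freeVarFinset {M : Type*} [L.Structure M] {α : Type*}
    [DecidableEq α] {φ : L.Formula α} {v v' : α → M}
    (h : ∀ x ∈ φ.freeVarFinset, v x = v' x) : φ.Realize v ↔ φ.Realize v' := by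
  have hv : (fun x : φ.freeVarFinset => v x) = fun x : φ.freeVarFinset => v' x :=
    funext fun x => h x x.2
  unfold Formula.Realize
  rw [← BoundedFormula.realize_restrictFreeVar (f := id) (v := fun x => v x) v (fun _ => rfl),
    ← BoundedFormula.realize_restrictFreeVar (f := id) (v := fun x => v' x) v' (fun _ => rfl), hv]

def IsPPGenerated (K : StrClass L) {B : Type u} [L.Structure B] (A : L.Substructure B) (b : B) :
    Prop :=
  ∃ (n : ℕ) (φ : L.Formula (Fin (n + 1))) (a : Fin n → A),
    IsPP φ ∧ DefinesFn K φ ∧ φ.Realize (Fin.snoc (fun i => (a i : B)) b)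

section Generated

variable {K : StrClass L} {B : Type u} [L.Structure B] {A : L.Substructure B}

theorem isPPGenerated_of_mem {b : B} (hb : b ∈ A) : IsPPGenerated K A b := by
  refine ⟨1, (Term.var (Fin.castSucc 0)).equal (Term.var (Fin.last 1)), fun _ => ⟨b, hb⟩,
    .of_conj (.of_isAtomic (.equal _ _)), fun C _ _ v y z hy hz => ?_, ?_⟩ <;>
  simp only [Formula.realize_equal, Term.realize_var, Fin.snoc_castSucc, Fin.snoc_last] at *
  rw [← hy, ← hz]

theorem IsPPGenerated.hom_eq {b : B} (h : IsPPGenerated K A b) {C : Type u} [L.Structure C]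
    (hC : K C) {g g' : B →[L] C} (hgg' : ∀ a ∈ A, g a = g' a) : g b = g' b := by
  obtain ⟨n, φ, a, hφ, hfn, hb⟩ := h
  have h₁ := hφ.realize_formula_hom g hb
  have h₂ := hφ.realize_formula_hom g' hb
  rw [Fin.comp_snoc] at h₁ h₂
  have hparams : g' ∘ (fun i => (a i : B)) = g ∘ (fun i => (a i : B)) :=
    funext fun i => (hgg' _ (a i).2).symm
  rw [hparams] at h₂
  exact hfn C hC _ _ _ h₁ h₂

theorem isEpicSubstructure_of_forall_isPPGenerated (h : ∀ b, IsPPGenerated K A b) :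
    IsEpicSubstructure K A :=
  fun _ _ hC _ _ hgg' => DFunLike.ext _ _ fun b => (h b).hom_eq hC hgg'

end Generated

def StrClass.IsClosedUnderUltraproducts (K : StrClass L) : Prop :=
  ∀ (ι : Type u) (U : Ultrafilter ι) (M : ι → Type u) [∀ i, L.Structure (M i)],
    (∀ i, K (M i)) → K ((U : Filter ι).Product M)

theorem StrClass.IsClosedUnderUltraproducts.exists_realize_iUnion {K : StrClass L}
    (hK : K.IsClosedUnderUltraproducts) {α : Type*} [Nonempty α]
    {ι : Type u} [Nonempty ι] [Preorder ι] [IsDirectedOrder ι]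
    {T : ι → Set (L.Formula α)} (hT : Monotone T)
    (hsat : ∀ i, ∃ (C : Type u) (_ : L.Structure C), K C ∧ ∃ v : α → C, ∀ ψ ∈ T i, ψ.Realize v) :
    ∃ (C : Type u) (_ : L.Structure C), K C ∧ ∃ v : α → C, ∀ i, ∀ ψ ∈ T i, ψ.Realize v := by
  choose C _ hC v hv using hsat
  have : ∀ i, Nonempty (C i) := fun i => ⟨v i (Classical.arbitrary α)⟩
  let U := Ultrafilter.of (Filter.atTop : Filter ι)
  refine ⟨(U : Filter ι).Product C, inferInstance, hK ι U C hC,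
    fun x => ((fun i => v i x : ∀ i, C i) : (U : Filter ι).Product C), fun i ψ hψ =>
    (Ultraproduct.realize_formula_cast ψ _).2 <|
      Ultrafilter.of_le _ ((Filter.eventually_ge_atTop i).mono fun j hij => hv j ψ (hT hij hψ))⟩

variable (L) (B : Type u) [L.Structure B] in
def posDiagram : Set (L.Formula B) :=
  {ψ | ψ.IsAtomic ∧ ψ.Realize id}

def Hom.ofRealizePosDiagram {B C : Type u} [L.Structure B] [L.Structure C] (u : B → C)
    (hu : ∀ ψ ∈ posDiagram L B, ψ.Realize u) : B →[L] C where
  toFun := u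
  map_fun' f x := by
    have := hu ((Term.func f fun i => Term.var (x i)).equal (Term.var (Structure.funMap f x)))
      ⟨.equal _ _, by simp [Formula.realize_equal]⟩
    simpa [Formula.realize_equal, Function.comp_def, eq_comm] using this
  map_rel' R x hR := by
    have := hu (R.formula fun i => Term.var (x i)) ⟨.rel _ _, by simpa [Formula.realize_rel]⟩
    simpa [Formula.realize_rel, Function.comp_def] using this

section Construction

open scoped Classical

variable {B : Type u} [L.Structure B] (A : L.Substructure B) (b : B) (S : Finset (posDiagram L B))

noncomputable def varsOf : Finset B :=
  S.biUnion fun ψ => (ψ : L.Formula B).freeVarFinset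

noncomputable def params : Finset B :=
  (varsOf S).filter (· ∈ A)

/-- In `ppFormula`, elements of `A` become parameters, `b` the output variable, and the other
variables of `S` are quantified existentially; elements outside `varsOf S` go to a junk slot. -/
noncomputable def slot : B → Fin (Fintype.card (params A S) + 1) ⊕ varsOf S := fun x =>
  if hx : x ∈ params A S then .inl (Fintype.equivFin _ ⟨x, hx⟩).castSucc
  else if hx : x ≠ b ∧ x ∈ varsOf S then .inr ⟨x, hx.2⟩
  else .inl (Fin.last _)

/-- The seed `b = b` is atomic, unlike `⊤`, so the conjunction is primitive positive. -/
noncomputable def conj : L.Formula B :=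
  (S.toList.map (↑)).foldr (· ⊓ ·) ((Term.var b).equal (Term.var b))

noncomputable def ppFormula : L.Formula (Fin (Fintype.card (params A S) + 1)) :=
  ((conj b S).relabel (slot A b S)).iExs (varsOf S)

noncomputable def paramTuple : Fin (Fintype.card (params A S)) → A := fun j =>
  let x := (Fintype.equivFin (params A S)).symm j
  ⟨x, (Finset.mem_filter.1 x.2).2⟩

theorem isPP_ppFormula : IsPP (ppFormula A b S) := by
  refine IsConjAtomic.isPP_iExs (IsConjAtomic.relabel ?_ _)
  refine IsConjAtomic.foldr_inf ?_ (.of_isAtomic (.equal _ _))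
  simp only [List.mem_map, Finset.mem_toList]
  rintro _ ⟨ψ, -, rfl⟩
  exact ψ.2.1

theorem realize_ppFormula {M : Type*} [L.Structure M]
    (w : Fin (Fintype.card (params A S) + 1) → M) :
    (ppFormula A b S).Realize w ↔
      ∃ i : varsOf S → M, ∀ ψ ∈ S, (ψ : L.Formula B).Realize (Sum.elim w i ∘ slot A b S) := by
  simp [ppFormula, conj, Formula.realize_relabel, realize_foldr_inf, Formula.realize_equal]

theorem slot_of_mem_params {x : B} (hx : x ∈ params A S) :
    slot A b S x = .inl (Fintype.equivFin _ ⟨x, hx⟩).castSucc :=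
  dif_pos hx

theorem slot_self (hb : b ∉ A) : slot A b S b = .inl (Fin.last _) := by
  have : b ∉ params A S := fun h => hb (Finset.mem_filter.1 h).2
  simp [slot, this]

theorem elim_paramTuple_slot (hb : b ∉ A) {x : B} (hx : x ∈ varsOf S) :
    Sum.elim (Fin.snoc (fun j => (paramTuple A S j : B)) b) Subtype.val (slot A b S x) = x := by
  by_cases hxA : x ∈ params A S
  · simp [slot_of_mem_params A b S hxA, paramTuple]
  by_cases hxb : x = b
  · subst hxb
    simp [slot_self A x S hb]
  · simp [slot, hxA, hxb, hx]

theorem realize_ppFormula_paramTuple (hb : b ∉ A) :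
    (ppFormula A b S).Realize (Fin.snoc (fun j => (paramTuple A S j : B)) b) := by
  refine (realize_ppFormula A b S _).2 ⟨Subtype.val, fun ψ hψ => ?_⟩
  refine (realize_congr_of_eqOn_freeVarFinset fun x hx => ?_).2 ψ.2.2
  exact elim_paramTuple_slot A b S hb (Finset.mem_biUnion.2 ⟨ψ, hψ, hx⟩)

/-- A valuation realizing `doubledDiagram A b S` for all `S` is a pair of homomorphisms out of
`B` that agree on `A` but not at `b`. -/
def doubledDiagram : Set (L.Formula (B ⊕ B)) :=
  {χ | ∃ ψ ∈ S, χ = (ψ : L.Formula B).relabel .inl ∨ χ = (ψ : L.Formula B).relabel .inr} ∪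
  {χ | ∃ x ∈ params A S, χ = (Term.var (.inl x)).equal (Term.var (.inr x))} ∪
  {∼((Term.var (.inl b)).equal (Term.var (.inr b)))}

theorem doubledDiagram_mono : Monotone (doubledDiagram (L := L) A b) := by
  intro S S' hSS'
  have hparams : params A S ⊆ params A S' :=
    Finset.filter_subset_filter _ (Finset.biUnion_subset_biUnion_of_subset_left _ hSS')
  rintro χ ((⟨ψ, hψ, hχ⟩ | ⟨x, hx, hχ⟩) | hχ)
  exacts [.inl (.inl ⟨ψ, hSS' hψ, hχ⟩), .inl (.inr ⟨x, hparams hx, hχ⟩), .inr hχ]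

theorem exists_realize_doubledDiagram {K : StrClass L} (hb : b ∉ A)
    (h : ¬IsPPGenerated K A b) :
    ∃ (C : Type u) (_ : L.Structure C), K C ∧
      ∃ v : B ⊕ B → C, ∀ χ ∈ doubledDiagram A b S, χ.Realize v := by
  have hfn : ¬DefinesFn K (ppFormula A b S) := fun hfn =>
    h ⟨_, _, _, isPP_ppFormula A b S, hfn, realize_ppFormula_paramTuple A b S hb⟩
  simp only [DefinesFn, not_forall] at hfn
  obtain ⟨C, _, hC, c, y₁, y₂, h₁, h₂, hne⟩ := hfn
  obtain ⟨i₁, h₁⟩ := (realize_ppFormula A b S _).1 h₁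
  obtain ⟨i₂, h₂⟩ := (realize_ppFormula A b S _).1 h₂
  refine ⟨C, _, hC, Sum.elim (Sum.elim (Fin.snoc c y₁) i₁ ∘ slot A b S)
    (Sum.elim (Fin.snoc c y₂) i₂ ∘ slot A b S), ?_⟩
  rintro χ ((⟨ψ, hψ, rfl | rfl⟩ | ⟨x, hx, rfl⟩) | rfl)
  · simpa [Formula.realize_relabel] using h₁ ψ hψ
  · simpa [Formula.realize_relabel] using h₂ ψ hψ
  · simp [Formula.realize_equal, slot_of_mem_params A b S hx]
  · simpa [Formula.realize_equal, slot_self A b S hb] using hne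

end Construction

theorem exists_hom_ne_of_not_isPPGenerated {L : FirstOrder.Language.{u, u}} {K : StrClass L}
    (hK : K.IsClosedUnderUltraproducts) {B : Type u} [L.Structure B] {A : L.Substructure B}
    {b : B} (hb : b ∉ A) (h : ¬IsPPGenerated K A b) :
    ∃ (C : Type u) (_ : L.Structure C), K C ∧ ∃ g g' : B →[L] C,
      (∀ a ∈ A, g a = g' a) ∧ g b ≠ g' b := by
  have : Nonempty (B ⊕ B) := ⟨.inl b⟩
  obtain ⟨C, _, hC, v, hv⟩ := hK.exists_realize_iUnion (doubledDiagram_mono A b)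
    (exists_realize_doubledDiagram A b · hb h)
  have hcopy (s : B → B ⊕ B) (hs : s = .inl ∨ s = .inr) :
      ∀ ψ ∈ posDiagram L B, ψ.Realize (v ∘ s) := fun ψ hψ => by
    rw [← Formula.realize_relabel]
    refine hv {⟨ψ, hψ⟩} _ (.inl (.inl ⟨⟨ψ, hψ⟩, Finset.mem_singleton_self _, ?_⟩))
    rcases hs with rfl | rfl <;> simp
  refine ⟨C, _, hC, Hom.ofRealizePosDiagram _ (hcopy _ (.inl rfl)),
    Hom.ofRealizePosDiagram _ (hcopy _ (.inr rfl)), fun a ha => ?_, ?_⟩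
  · let ψ : posDiagram L B := ⟨(Term.var a).equal (Term.var a), .equal _ _, rfl⟩
    have hmem : a ∈ params A {ψ} := by
      simp [params, varsOf, ψ, ha, Term.equal, Term.bdEqual, Term.varFinsetLeft]
    show v (.inl a) = v (.inr a)
    simpa [Formula.realize_equal] using hv {ψ} _ (.inl (.inr ⟨a, hmem, rfl⟩))
  · show v (.inl b) ≠ v (.inr b)
    simpa [Formula.realize_equal] using hv ∅ _ (.inr rfl)

theorem epic_substructure_iff_pp_generated_general {L : FirstOrder.Language.{u, u}}
    (K : StrClass L)
    (hPu : ∀ (ι : Type u) (U : Ultrafilter ι) (M : ι → Type u) [∀ i, L.Structure (M i)],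
      (∀ i, K (M i)) → K ((U : Filter ι).Product M))
    {B : Type u} [L.Structure B] (A : L.Substructure B) :
    IsEpicSubstructure K A ↔
      ∀ b : B, ∃ (n : ℕ) (φ : L.Formula (Fin (n + 1))) (a : Fin n → A),
        IsPP φ ∧ DefinesFn K φ ∧ φ.Realize (Fin.snoc (fun i => (a i : B)) b) := by
  refine ⟨fun hepic b => ?_, isEpicSubstructure_of_forall_isPPGenerated⟩
  by_cases hbA : b ∈ A
  · exact isPPGenerated_of_mem hbA
  by_contra h
  obtain ⟨C, _, hC, g, g', hgg', hne⟩ := exists_hom_ne_of_not_isPPGenerated hPu hbA h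
  exact hne (DFunLike.congr_fun (hepic C hC g g' hgg') b)

/-- Theorem: epic substructures are primitive positively generated.
Let `K` be a class of `L`-structures closed under ultraproducts, with `A ≤ B` and
`A, B ∈ K`.  Then `A` is an epic substructure of `B` in `K` iff every `b ∈ B` is the
value at a tuple of elements of `A` of a primitive positive formula defining a
function in `K`. -/
theorem epic_substructure_iff_pp_generated {L : FirstOrder.Language.{u, u}}
    (K : StrClass L)
    (hPu : ∀ (ι : Type u) (U : Ultrafilter ι) (M : ι → Type u) [∀ i, L.Structure (M i)],
      (∀ i, K (M i)) → K ((U : Filter ι).Product M))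
    {B : Type u} [L.Structure B] (A : L.Substructure B) (hA : K A) (hB : K B) :
    IsEpicSubstructure K A ↔
      ∀ b : B, ∃ (n : ℕ) (φ : L.Formula (Fin (n + 1))) (a : Fin n → A),
        IsPP φ ∧ DefinesFn K φ ∧ φ.Realize (Fin.snoc (fun i => (a i : B)) b) :=
  epic_substructure_iff_pp_generated_general K hPu A

end Epic
end

section
/- Let L be a first-order language, K any class of L-structures (no closure assumptions), and let A be a substructure of B with A, B ∈ K. If for every b ∈ B there exist a primitive positive formula φ(x₁,…,xₙ,y) that defines a function in K and elements a₁,…,aₙ ∈ A such that B ⊨ φ(ā,b), then A is an epic substructure of B in K. -/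
open FirstOrder FirstOrder.Language

universe u v w

namespace Epic

variable {L : FirstOrder.Language.{u, v}}

lemma realize_of_conjAtomic {M N : Type u} [L.Structure M] [L.Structure N] (g : M →[L] N)
    {α : Type w} {n : ℕ} {φ : L.BoundedFormula α n} (hφ : IsConjAtomic φ)
    {v : α → M} {xs : Fin n → M} (hr : φ.Realize v xs) :
    φ.Realize (g ∘ v) (g ∘ xs) := by
  induction hφ with
  | of_isAtomic ha =>
    cases ha with
    | equal t₁ t₂ =>
      rw [BoundedFormula.realize_bdEqual] at hr ⊢
      rw [← Sum.comp_elim, HomClass.realize_term, HomClass.realize_term, hr]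
    | rel R ts =>
      rw [BoundedFormula.realize_rel] at hr ⊢
      have hfun : (fun i => Term.realize (Sum.elim (⇑g ∘ v) (⇑g ∘ xs)) (ts i)) =
          ⇑g ∘ fun i => Term.realize (Sum.elim v xs) (ts i) := by
        funext i
        rw [← Sum.comp_elim, HomClass.realize_term]
        rfl
      rw [hfun]
      exact HomClass.map_rel g R _ hr
  | inf h₁ h₂ ih₁ ih₂ =>
    rw [BoundedFormula.realize_inf] at hr ⊢
    exact ⟨ih₁ hr.1, ih₂ hr.2⟩

lemma realize_of_pp {M N : Type u} [L.Structure M] [L.Structure N] (g : M →[L] N)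
    {α : Type w} {n : ℕ} {φ : L.BoundedFormula α n} (hφ : IsPP φ)
    {v : α → M} {xs : Fin n → M} (hr : φ.Realize v xs) :
    φ.Realize (g ∘ v) (g ∘ xs) := by
  induction hφ with
  | of_conj h => exact realize_of_conjAtomic g h hr
  | ex h ih =>
    rw [BoundedFormula.realize_ex] at hr ⊢
    obtain ⟨a, ha⟩ := hr
    exact ⟨g a, by simpa [Fin.comp_snoc] using ih ha⟩

lemma realize_formula_of_pp {M N : Type u} [L.Structure M] [L.Structure N] (g : M →[L] N)
    {α : Type w} {φ : L.Formula α} (hφ : IsPP φ) {v : α → M} (hr : φ.Realize v) :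
    φ.Realize (⇑g ∘ v) := by
  have h0 := realize_of_pp g hφ hr
  rwa [Subsingleton.elim (⇑g ∘ (default : Fin 0 → M)) default] at h0

/-- pp generation implies epic substructure, for arbitrary classes.
If every `b ∈ B` satisfies `φ(ā, b)` for some primitive positive formula `φ` defining a
function in `K` and some tuple `ā` from `A`, then `A` is an epic substructure of `B` in `K`. -/
theorem pp_generated_implies_epic_substructure {L : FirstOrder.Language.{u, v}}
    (K : StrClass L) {B : Type u} [L.Structure B] (A : L.Substructure B)
    (hA : K A) (hB : K B)
    (h : ∀ b : B, ∃ (n : ℕ) (φ : L.Formula (Fin (n + 1))) (a : Fin n → A),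
      IsPP φ ∧ DefinesFn K φ ∧ φ.Realize (Fin.snoc (fun i => (a i : B)) b)) :
    IsEpicSubstructure K A := by
  intro C _ hC g g' hag
  ext b
  obtain ⟨n, φ, a, hpp, hfn, hreal⟩ := h b
  have hg : φ.Realize (Fin.snoc (fun i => g (a i : B)) (g b)) := by
    have := realize_formula_of_pp g hpp hreal
    rwa [Fin.comp_snoc] at this
  have hg' : φ.Realize (Fin.snoc (fun i => g' (a i : B)) (g' b)) := by
    have := realize_formula_of_pp g' hpp hreal
    rwa [Fin.comp_snoc] at this
  have heq : (fun i => g ((a i : B))) = fun i => g' (a i : B) := by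
    funext i; exact hag _ (a i).2
  rw [heq] at hg
  exact hfn C hC _ _ _ hg hg'


end Epic
end

section
/- Let K be a class of L-structures and A, B ∈ K with A a substructure of B. Then A is an epic substructure of B in K if and only if A is an epic substructure of B in ISP(K), the class of all isomorphic copies of substructures of direct products of families of members of K. -/
open FirstOrder FirstOrder.Language

universe u v w

namespace Epic

variable {L : FirstOrder.Language.{u, v}}

/-- The direct product structure on a product of a family of `L`-structures. -/
instance piStructure {ι : Type w} (M : ι → Type u) [∀ i, L.Structure (M i)] :
    L.Structure (∀ i, M i) where
  funMap f x i := Structure.funMap f (fun j => x j i)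
  RelMap r x := ∀ i, Structure.RelMap r (fun j => x j i)

variable (L) in
/-- `ISP K` : the class of all structures isomorphic to a substructure of a direct
product of a family of members of `K`. -/
def ISP (K : StrClass L) : StrClass L := fun M _ =>
  ∃ (ι : Type u) (N : ι → Type u) (inst : ∀ i, L.Structure (N i)),
    letI := inst
    (∀ i, K (N i)) ∧ ∃ S : L.Substructure (∀ i, N i), Nonempty (M ≃[L] S)


/-- Projection of the direct product onto a coordinate, as a homomorphism. -/
def projHom {ι : Type w} (M : ι → Type u) [∀ i, L.Structure (M i)] (i : ι) :
    (∀ j, M j) →[L] M i where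
  toFun x := x i
  map_fun' _ _ := rfl
  map_rel' _ _ h := h i

/-- A structure is isomorphic to the product over `PUnit`. -/
def punitPiEquiv (C : Type u) [L.Structure C] : C ≃[L] (PUnit.{u + 1} → C) where
  toFun c := fun _ => c
  invFun f := f PUnit.unit
  left_inv _ := rfl
  right_inv _ := funext fun _ => rfl
  map_fun' _ _ := rfl
  map_rel' r x := by
    constructor
    · intro h; exact h PUnit.unit
    · intro h _; exact h

/-- Lemma 3(1).  `A` is an epic substructure of `B` in `K` iff it is an
epic substructure of `B` in `ISP(K)`. -/
theorem epic_substructure_iff_epic_in_ISP {L : FirstOrder.Language.{u, v}}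
    (K : StrClass L) {B : Type u} [L.Structure B] (A : L.Substructure B)
    (hA : K A) (hB : K B) :
    IsEpicSubstructure K A ↔ IsEpicSubstructure (ISP L K) A := by
  constructor
  · intro h C _ hC g g' hgg'
    obtain ⟨ι, N, inst, hN, S, ⟨e⟩⟩ := hC
    have key : ∀ i : ι,
        ((projHom N i).comp ((S.subtype.toHom).comp (e.toHom.comp g))) =
        ((projHom N i).comp ((S.subtype.toHom).comp (e.toHom.comp g'))) := by
      intro i
      apply h (N i) (hN i)
      intro a ha
      simp only [Hom.comp_apply, Embedding.coe_toHom, Equiv.coe_toHom]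
      rw [hgg' a ha]
    ext b
    have hB : e (g b) = e (g' b) := by
      apply Subtype.ext
      funext i
      exact congrFun (congrArg DFunLike.coe (key i)) b
    exact e.injective hB
  · intro h C _ hC g g' hgg'
    apply h C _ g g' hgg'
    refine ⟨PUnit.{u + 1}, fun _ => C, fun _ => inferInstance, fun _ => hC, ⊤,
      ⟨Language.Equiv.comp (Language.Equiv.symm Substructure.topEquiv) (punitPiEquiv C)⟩⟩

end Epic
end

section
/- Let K be a class of L-structures, let A, B ∈ K with A an epic substructure of B in K, and suppose h : B → C is a homomorphism such that the images h(A) and h(B) (as substructures of C) belong to K. Then h(A) is an epic substructure of h(B) in K. -/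
open FirstOrder FirstOrder.Language

universe u v w

namespace Epic

variable {L : FirstOrder.Language.{u, v}}

/-- Lemma 3(2).  If `A ≤ₑ B` in `K` and `h : B → C` is a homomorphism
with `h(A), h(B) ∈ K`, then `h(A)` is an epic substructure of `h(B)` in `K`.  Here `h(B)`
is the range of `h` and `h(A)` is viewed as a substructure of `h(B)`. -/
theorem epic_substructure_image {L : FirstOrder.Language.{u, v}} (K : StrClass L)
    {B C : Type u} [L.Structure B] [L.Structure C] (A : L.Substructure B)
    (hA : K A) (hB : K B) (hepic : IsEpicSubstructure K A)
    (h : B →[L] C) (hhA : K (A.map h)) (hhB : K h.range) :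
    IsEpicSubstructure K
      (A.map (Hom.codRestrict h.range h fun b => h.mem_range_self b)) := by
  intro D _ hD g g' hag
  set hr : B →[L] h.range := Hom.codRestrict h.range h fun b => h.mem_range_self b with hrdef
  have key : g.comp hr = g'.comp hr := by
    apply hepic D hD
    intro a ha
    exact hag (hr a) (Substructure.mem_map.mpr ⟨a, ha, rfl⟩)
  ext x
  obtain ⟨b, hb⟩ := x.2
  have hx : x = hr b := Subtype.ext hb.symm
  rw [hx]
  exact congrFun (congrArg DFunLike.coe key) b

end Epic
end

section
/- Let K be a class of L-structures that, up to isomorphism, is a finite set of finite structures, and let A be a substructure of B with B finite and A, B ∈ K. If A is an epic substructure of B in K, then for every b₁ ∈ B there exist a finite conjunction of atomic formulas α(x₁,…,xₙ,y₁,…,y_m) with m ≥ 1, elements a₁,…,aₙ ∈ A, and elements b₂,…,b_m ∈ B such that: (a) α(x̄,ȳ) defines an m-tuple-valued function in K, i.e., K ⊨ ∀x̄∀ȳ∀z̄ (α(x̄,ȳ) ∧ α(x̄,z̄) → ȳ = z̄); and (b) (b₁,…,b_m) is the unique m-tuple from B with B ⊨ α(ā, b̄). -/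
/-!
Enumerate `A` by `ā` and `B` by `b̄` with `b̄ 0 = b₁`. The positive atomic diagram `Δ(x̄, ȳ)` of
`B`, with `x̄` standing for `ā` and `ȳ` for `b̄`, is realized in `C` exactly by the tuples
`(g ā, g b̄)` with `g : B → C` a homomorphism, so epicness of `A` says that `Δ` defines a
tuple-valued function in `K`. As `K` has, up to isomorphism, only finitely many members, all
finite, only finitely many pairs of distinct candidate values `ȳ ≠ z̄` have to be separated, and
finitely many formulas of `Δ` already do so; their conjunction is `α`.
-/

open FirstOrder FirstOrder.Language

universe u v w

namespace Epic

variable {L : FirstOrder.Language.{u, v}}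

/-- The formula `α(x₁,…,xₙ,y₁,…,yₘ)` defines an `m`-tuple-valued function in `K`:
`K ⊨ ∀ x̄ ȳ z̄, α(x̄,ȳ) ∧ α(x̄,z̄) → ȳ = z̄`. -/
def DefinesTupleFn (K : StrClass L) {n m : ℕ} (α : L.Formula (Fin n ⊕ Fin m)) : Prop :=
  ∀ (C : Type u) [L.Structure C], K C → ∀ (v : Fin n → C) (y z : Fin m → C),
    α.Realize (Sum.elim v y) → α.Realize (Sum.elim v z) → y = z

def DefinesTupleFnSet (K : StrClass L) {ι κ : Type*} (S : Set (L.Formula (ι ⊕ κ))) : Prop :=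
  ∀ (C : Type u) [L.Structure C], K C → ∀ (v : ι → C) (y z : κ → C),
    (∀ φ ∈ S, φ.Realize (Sum.elim v y)) → (∀ φ ∈ S, φ.Realize (Sum.elim v z)) → y = z

section Diagram

variable {ι κ : Type*} {B : Type u} [L.Structure B]

variable (L) in
/-- The positive atomic diagram of `B` in the variables `ι ⊕ κ`: the variable `inr k` names `e k`,
and `inl i` is equated with the name of `a i`. -/
inductive PositiveDiagram (a : ι → B) (e : κ ≃ B) : Set (L.Formula (ι ⊕ κ))
  | func {l : ℕ} (f : L.Functions l) (c : Fin l → B) :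
      PositiveDiagram a e ((Term.func f fun q => Term.var (Sum.inr (e.symm (c q)))).equal
        (Term.var (Sum.inr (e.symm (Structure.funMap f c)))))
  | rel {l : ℕ} (R : L.Relations l) (c : Fin l → B) (hR : Structure.RelMap R c) :
      PositiveDiagram a e (R.formula fun q => Term.var (Sum.inr (e.symm (c q))))
  | param (i : ι) :
      PositiveDiagram a e ((Term.var (Sum.inl i)).equal (Term.var (Sum.inr (e.symm (a i)))))

variable {a : ι → B} {e : κ ≃ B}

theorem PositiveDiagram.isAtomic {φ : L.Formula (ι ⊕ κ)} (hφ : φ ∈ PositiveDiagram L a e) :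
    φ.IsAtomic := by
  cases hφ <;> constructor

theorem PositiveDiagram.realize {φ : L.Formula (ι ⊕ κ)} (hφ : φ ∈ PositiveDiagram L a e) :
    φ.Realize (Sum.elim a e) := by
  cases hφ with
  | func f c => simp [Formula.realize_equal]
  | rel R c hR => simpa [Formula.realize_rel] using hR
  | param i => simp [Formula.realize_equal]

theorem PositiveDiagram.exists_hom {C : Type*} [L.Structure C] {v : ι → C} {y : κ → C}
    (h : ∀ φ ∈ PositiveDiagram L a e, φ.Realize (Sum.elim v y)) :
    ∃ g : B →[L] C, (∀ k, g (e k) = y k) ∧ ∀ i, g (a i) = v i := by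
  refine ⟨⟨fun x => y (e.symm x), fun {l} f c => ?_, fun {l} R c hR => ?_⟩,
    fun k => congrArg y (e.symm_apply_apply k), fun i => ?_⟩
  · simpa [Formula.realize_equal, Function.comp_def, eq_comm] using h _ (PositiveDiagram.func f c)
  · simpa [Formula.realize_rel, Function.comp_def] using h _ (PositiveDiagram.rel R c hR)
  · have hi : v i = y (e.symm (a i)) := by
      simpa [Formula.realize_equal] using h _ (PositiveDiagram.param i)
    exact hi.symm

theorem definesTupleFnSet_positiveDiagram {K : StrClass L} {A : L.Substructure B}
    (hepic : IsEpicSubstructure K A) (ha : ∀ x ∈ A, ∃ i, a i = x) :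
    DefinesTupleFnSet K (PositiveDiagram L a e) := by
  intro C _ hC v y z hy hz
  obtain ⟨g, hge, hga⟩ := PositiveDiagram.exists_hom hy
  obtain ⟨g', hge', hga'⟩ := PositiveDiagram.exists_hom hz
  have hgg' : g = g' := hepic C hC g g' fun x hx => by
    obtain ⟨i, rfl⟩ := ha x hx
    rw [hga, hga']
  funext k
  rw [← hge, ← hge', hgg']

end Diagram

theorem DefinesTupleFnSet.exists_finset {K : StrClass L} {J : Type*} [Finite J]
    (T : J → Type u) [∀ j, L.Structure (T j)] [∀ j, Finite (T j)]
    (hK : ∀ (M : Type u) [L.Structure M], K M → ∃ j, Nonempty (M ≃[L] T j))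
    {ι κ : Type*} [Finite ι] [Finite κ] {S : Set (L.Formula (ι ⊕ κ))}
    (hS : DefinesTupleFnSet K S) :
    ∃ s : Finset (L.Formula (ι ⊕ κ)), ↑s ⊆ S ∧
      DefinesTupleFnSet K (s : Set (L.Formula (ι ⊕ κ))) := by
  classical
  let Config := Σ j, (ι → T j) × (κ → T j) × (κ → T j)
  let Holds (s : Set (L.Formula (ι ⊕ κ))) (c : Config) : Prop :=
    ∀ φ ∈ s, φ.Realize (Sum.elim c.2.1 c.2.2.1) ∧ φ.Realize (Sum.elim c.2.1 c.2.2.2)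
  -- Each configuration violating some member of `S` is caught by a single such member.
  have hsep (c : Config) :
      ∃ s : Finset (L.Formula (ι ⊕ κ)), ↑s ⊆ S ∧ (Holds s c → Holds S c) := by
    by_cases hc : Holds S c
    · exact ⟨∅, by simp, fun _ => hc⟩
    · obtain ⟨φ, hφS, hφ⟩ := not_forall₂.mp hc
      exact ⟨{φ}, by simpa using hφS, fun h => absurd (h φ (by simp)) hφ⟩
  choose sep hsepS hsep using hsep
  have : Fintype Config := Fintype.ofFinite Config
  refine ⟨Finset.univ.biUnion sep, by simpa using hsepS, ?_⟩
  intro C _ hC v y z hy hz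
  obtain ⟨j, ⟨g⟩⟩ := hK C hC
  have hreal (w : ι ⊕ κ → C) (φ : L.Formula (ι ⊕ κ)) : φ.Realize (g ∘ w) ↔ φ.Realize w :=
    StrongHomClass.realize_formula g φ
  have hc : Holds S ⟨j, g ∘ v, g ∘ y, g ∘ z⟩ := hsep _ fun φ hφ => by
    have hφs : φ ∈ Finset.univ.biUnion sep := Finset.mem_biUnion.mpr ⟨_, Finset.mem_univ _, hφ⟩
    simp only [← Sum.comp_elim, hreal]
    exact ⟨hy φ hφs, hz φ hφs⟩
  refine hS C hC v y z (fun φ hφ => ?_) (fun φ hφ => ?_)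
  · simpa only [← Sum.comp_elim, hreal] using (hc φ hφ).1
  · simpa only [← Sum.comp_elim, hreal] using (hc φ hφ).2

theorem exists_isConjAtomic_realize_iff_forall_mem {α : Type w} [Nonempty α]
    (s : Finset (L.Formula α)) (hs : ∀ φ ∈ s, φ.IsAtomic) :
    ∃ φ : L.Formula α, IsConjAtomic φ ∧
      ∀ (M : Type u) [L.Structure M] (v : α → M), φ.Realize v ↔ ∀ ψ ∈ s, ψ.Realize v := by
  classical
  induction s using Finset.induction_on with
  | empty =>
    obtain ⟨x⟩ := ‹Nonempty α›
    exact ⟨(Term.var x).equal (Term.var x), .of_isAtomic (.equal _ _), by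
      simp [Formula.realize_equal]⟩
  | insert ψ s _ ih =>
    obtain ⟨φ, hφ, hφs⟩ := ih fun χ hχ => hs χ (Finset.mem_insert_of_mem hχ)
    refine ⟨ψ ⊓ φ, .inf (.of_isAtomic (hs ψ (Finset.mem_insert_self ψ s))) hφ, ?_⟩
    intro M _ v
    simp [hφs]

theorem exists_fin_succ_equiv_apply_zero {B : Type*} [Finite B] (b : B) :
    ∃ (m : ℕ) (e : Fin (m + 1) ≃ B), e 0 = b := by
  obtain ⟨m, hm⟩ := Nat.exists_eq_succ_of_ne_zero (Nat.card_ne_zero.mpr ⟨⟨b⟩, inferInstance⟩)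
  let e := (Finite.equivFinOfCardEq hm).symm
  exact ⟨m, (Equiv.swap 0 (e.symm b)).trans e, by simp⟩

theorem epic_substructure_finite_case_general {L : FirstOrder.Language.{u, v}} (K : StrClass L)
    (k : ℕ) (T : Fin k → Type u) [∀ i, L.Structure (T i)] (hTfin : ∀ i, Finite (T i))
    (hKiso : ∀ (M : Type u) [L.Structure M], K M ↔ ∃ i, Nonempty (M ≃[L] T i))
    {B : Type u} [L.Structure B] [Finite B] (A : L.Substructure B)
    (hB : K B) (hepic : IsEpicSubstructure K A) :
    ∀ b₁ : B, ∃ (n m : ℕ) (α : L.Formula (Fin n ⊕ Fin (m + 1)))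
      (a : Fin n → A) (b : Fin (m + 1) → B),
        IsConjAtomic α ∧
        DefinesTupleFn K α ∧
        b 0 = b₁ ∧
        α.Realize (Sum.elim (fun i => (a i : B)) b) ∧
        ∀ b' : Fin (m + 1) → B, α.Realize (Sum.elim (fun i => (a i : B)) b') → b' = b := by
  intro b₁
  obtain ⟨m, e, he⟩ := exists_fin_succ_equiv_apply_zero b₁
  let eA : Fin (Nat.card A) ≃ A := (Finite.equivFin A).symm
  let a : Fin (Nat.card A) → B := fun i => eA i
  have hΔ : DefinesTupleFnSet K (PositiveDiagram L a e) :=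
    definesTupleFnSet_positiveDiagram hepic fun x hx => ⟨eA.symm ⟨x, hx⟩, by simp [a]⟩
  have : ∀ i, Finite (T i) := hTfin
  obtain ⟨s, hsΔ, hs⟩ := DefinesTupleFnSet.exists_finset T (fun M _ => (hKiso M).mp) hΔ
  obtain ⟨α, hα, hαs⟩ :=
    exists_isConjAtomic_realize_iff_forall_mem s fun φ hφ => PositiveDiagram.isAtomic (hsΔ hφ)
  have hαfn : DefinesTupleFn K α := fun C _ hC v y z hy hz =>
    hs C hC v y z ((hαs C _).mp hy) ((hαs C _).mp hz)
  have hαb : α.Realize (Sum.elim a e) :=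
    (hαs B _).mpr fun φ hφ => PositiveDiagram.realize (hsΔ hφ)
  exact ⟨Nat.card A, m, α, eA, e, hα, hαfn, he, hαb, fun b' hb' => hαfn B hB a b' e hb' hαb⟩

/-- Theorem 6, (1) ⇒ (2).  If `K` is, up to isomorphism, a finite set of
finite structures, `B` is finite, `A ≤ B` with `A, B ∈ K`, and `A` is an epic substructure
of `B` in `K`, then every `b₁ ∈ B` is the first coordinate of the value of a quantifier-free
tuple-valued function, given by a finite conjunction of atomic formulas defining a function
in `K`, at a tuple of parameters from `A`. -/
theorem epic_substructure_finite_case {L : FirstOrder.Language.{u, v}} (K : StrClass L)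
    (k : ℕ) (T : Fin k → Type u) [∀ i, L.Structure (T i)] (hTfin : ∀ i, Finite (T i))
    (hKiso : ∀ (M : Type u) [L.Structure M], K M ↔ ∃ i, Nonempty (M ≃[L] T i))
    {B : Type u} [L.Structure B] [Finite B] (A : L.Substructure B)
    (hA : K A) (hB : K B) (hepic : IsEpicSubstructure K A) :
    ∀ b₁ : B, ∃ (n m : ℕ) (α : L.Formula (Fin n ⊕ Fin (m + 1)))
      (a : Fin n → A) (b : Fin (m + 1) → B),
        IsConjAtomic α ∧
        DefinesTupleFn K α ∧
        b 0 = b₁ ∧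
        α.Realize (Sum.elim (fun i => (a i : B)) b) ∧
        ∀ b' : Fin (m + 1) → B, α.Realize (Sum.elim (fun i => (a i : B)) b') → b' = b :=
  epic_substructure_finite_case_general K k T hTfin hKiso A hB hepic

end Epic
end

section
/- Let L be the language with one binary function symbol s and one constant symbol 0. Let B be the L-structure with universe ℕ ∪ {∞} (where ∞ is an extra point not in ℕ), with 0 interpreted as the natural number 0, and s^B(a,b) = 0 if a, b ∈ ℕ and b = a + 1, and s^B(a,b) = 1 otherwise. Then: (i) the identity is the only homomorphism from B to B; and (ii) the substructure A of B with universe ℕ is a proper epic substructure of B in the class {B}, i.e., A ≠ B and any two homomorphisms g, g' : B → B that agree on ℕ are equal. -/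
open FirstOrder FirstOrder.Language

namespace EpicExample

/-- The function symbols of the language `L = {s, 0}`: a single constant symbol `zero`
and a single binary function symbol `s`. -/
inductive Fns : ℕ → Type
  | zero : Fns 0
  | s : Fns 2

/-- The language with one binary function symbol `s` and one constant symbol `0`. -/
def Lsig : FirstOrder.Language := ⟨Fns, fun _ => Empty⟩

/-- The universe `ℕ ∪ {∞}` of the structure `B`, with `none` playing the role of `∞`. -/
abbrev OB := Option ℕ

/-- The interpretation of the binary symbol `s`:
`s(a,b) = 0` if `a, b ∈ ℕ` and `b = a + 1`, and `s(a,b) = 1` otherwise. -/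
def sB : OB → OB → OB
  | some a, some b => if b = a + 1 then some 0 else some 1
  | _, _ => some 1

instance : Lsig.Structure OB where
  funMap {n} f x :=
    match f with
    | .zero => some 0
    | .s => sB (x 0) (x 1)
  RelMap {n} r _ := r.elim

theorem sB_isSome (a b : OB) : ∃ n : ℕ, sB a b = some n := by
  rcases a with _ | a <;> rcases b with _ | b <;> simp [sB] <;> split <;> simp

/-- The substructure `A` of `B` with universe `ℕ`. -/
def natSub : Lsig.Substructure OB where
  carrier := Set.range some
  fun_mem := fun {n} f x _hx =>
    match n, f with
    | _, Fns.zero => ⟨0, rfl⟩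
    | _, Fns.s => (sB_isSome (x 0) (x 1)).elim fun m hm => ⟨m, hm.symm⟩

theorem sB_eq_zero_iff {a b : OB} : sB a b = some 0 ↔ ∃ n : ℕ, a = some n ∧ b = some (n + 1) := by
  rcases a with _ | a <;> rcases b with _ | b <;> simp [sB, eq_comm]

theorem sB_none_left (b : OB) : sB none b = some 1 := by
  cases b <;> rfl

section Endomorphism

variable (g : OB →[Lsig] OB)

theorem endo_map_zero : g (some 0) = some 0 := by
  simpa [Structure.funMap] using g.map_fun Fns.zero Fin.elim0

theorem endo_map_sB (a b : OB) : g (sB a b) = sB (g a) (g b) := by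
  simpa [Structure.funMap] using g.map_fun Fns.s ![a, b]

theorem endo_map_some (n : ℕ) : g (some n) = some n := by
  induction n with
  | zero => exact endo_map_zero g
  | succ n ih =>
    -- `s(n, n+1) = 0` is preserved, and `0` only arises as `s(m, m+1)`.
    have h : sB (some n) (g (some (n + 1))) = some 0 := by
      rw [← ih, ← endo_map_sB g, sB, if_pos rfl, endo_map_zero g]
    obtain ⟨m, hm, hsucc⟩ := sB_eq_zero_iff.mp h
    rw [hsucc, Option.some_injective _ hm]

theorem endo_map_none : g none = none := by
  rcases hm : g none with _ | m
  · rfl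
  · -- `s(∞, m+1) = 1`, but its image `s(m, m+1)` is `0`.
    have h := endo_map_sB g none (some (m + 1))
    rw [sB_none_left, endo_map_some, hm, endo_map_some, sB, if_pos rfl] at h
    cases h

theorem endo_eq_id : g = Hom.id Lsig OB :=
  DFunLike.ext _ _ fun
    | none => endo_map_none g
    | some n => endo_map_some g n

end Endomorphism

theorem natSub_ne_top : natSub ≠ ⊤ := fun h => by
  obtain ⟨n, hn⟩ : (none : OB) ∈ natSub := h ▸ Substructure.mem_top none
  cases hn

/-- Example 7.  In the structure `B` on `ℕ ∪ {∞}` described above: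
(i) the identity is the only homomorphism from `B` to `B`; and
(ii) the substructure `A` with universe `ℕ` is a proper epic substructure of `B` in the
class `{B}`: `A ≠ B`, and any two homomorphisms `g, g' : B → B` agreeing on `ℕ` are
equal. -/
theorem identity_only_endomorphism_and_proper_epic :
    (∀ g : OB →[Lsig] OB, g = Hom.id Lsig OB) ∧
    (natSub ≠ ⊤ ∧
      ∀ g g' : OB →[Lsig] OB, (∀ a ∈ natSub, g a = g' a) → g = g') :=
  ⟨endo_eq_id, natSub_ne_top, fun g g' _ => (endo_eq_id g).trans (endo_eq_id g').symm⟩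

end EpicExample
end
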